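/- arXiv:2508.13809 — 6 statements merged into one kernel-verified Lean document; each statement's English description precedes it below -/
import Mathlib

section
/- Let A_1, …, A_m and B_1, …, B_m be subsets of [n], and let L = {l_1, …, l_k} be a set of k nonnegative integers. Suppose that |A_r ∩ B_s| ∈ L for all r ≠ s, that A_r ⊆ B_r for every r, and that |A_r| ∉ L for every r, 1 ≤ r ≤ m. Then m ≤ ∑_{i=0}^{k} C(n−1, i), where C(a,b) denotes the binomial coefficient. -/
/-!
Polynomial method. Fix a point `p`. To each `r` attach the multilinear polynomial
`f_r(x) = ∏_{l ∈ L} (∑_{i ∈ A_r \ {p}} x_i + [p ∈ A_r] - l)`, which does not involve `x_p` and has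
degree at most `k`. Evaluated at the indicator vector of `B_s`, it equals `∏_{l ∈ L} (|A_r ∩ B_s| - l)`
as soon as `p ∈ A_r → p ∈ B_s`; this vanishes for `r ≠ s` and not for `r = s`. Listing first the
indices `s` with `p ∈ B_s`, the evaluation matrix becomes triangular with nonzero diagonal
(using `A_r ⊆ B_r`), so the `f_r` are linearly independent in the span of the monomials `x^T`,
`T ⊆ [n] \ {p}`, `|T| ≤ k`, a space of dimension at most `∑_{i ≤ k} C(n-1, i)`.
-/

open Finset

section Triangular

variable {R X ι β : Type*} [Ring R] [NoZeroDivisors R] [Fintype ι] [LinearOrder β] [WellFoundedLT β]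

theorem linearIndependent_of_eval_triangular (f : ι → X → R) (x : ι → X) (b : ι → β)
    (hdiag : ∀ s, f s (x s) ≠ 0) (hoff : ∀ r s, r ≠ s → b s ≤ b r → f r (x s) = 0) :
    LinearIndependent R f := by
  rw [Fintype.linearIndependent_iff]
  intro g hg
  suffices ∀ c s, b s = c → g s = 0 from fun s => this _ s rfl
  intro c
  induction c using WellFoundedLT.induction with
  | _ c ih =>
    rintro s rfl
    have h : ∑ r, g r * f r (x s) = 0 := by simpa using congrFun hg (x s)
    rw [sum_eq_single s (fun r _ hrs => ?_) (by simp)] at h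
    · exact (mul_eq_zero.1 h).resolve_right (hdiag s)
    rcases le_or_gt (b s) (b r) with hle | hlt
    · rw [hoff r s hrs hle, mul_zero]
    · rw [ih _ hlt r rfl, zero_mul]

end Triangular

section LowDegree

variable {α : Type*} [DecidableEq α] (R : Type*) [CommRing R]

/-- The multilinear monomial `∏_{i ∈ T} x_i`, as a function of `S` with `x` the indicator
vector of `S`. -/
def monomialFn (T S : Finset α) : R := if T ⊆ S then 1 else 0

def lowDegreeSpan (U : Finset α) (d : ℕ) : Submodule R (Finset α → R) :=
  Submodule.span R (monomialFn R '' ↑{T ∈ U.powerset | #T ≤ d})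

variable {R}

theorem monomialFn_mem_lowDegreeSpan {U T : Finset α} {d : ℕ} (hT : T ⊆ U) (hd : #T ≤ d) :
    monomialFn R T ∈ lowDegreeSpan R U d :=
  Submodule.subset_span ⟨T, by simp [hT, hd], rfl⟩

theorem lowDegreeSpan_mono {U U' : Finset α} {d d' : ℕ} (hU : U ⊆ U') (hd : d ≤ d') :
    lowDegreeSpan R U d ≤ lowDegreeSpan R U' d' :=
  Submodule.span_le.2 <| Set.image_subset_iff.2 fun T hT => by
    simp only [coe_filter, mem_powerset, Set.mem_ofPred_eq] at hT
    exact monomialFn_mem_lowDegreeSpan (hT.1.trans hU) (hT.2.trans hd)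

theorem card_inter_add_mul_monomialFn (A T : Finset α) (c : R) :
    (fun S => (#(A ∩ S) : R) + c) * monomialFn R T =
      ∑ i ∈ A, monomialFn R (insert i T) + c • monomialFn R T := by
  funext S
  by_cases hT : T ⊆ S
  · simp [monomialFn, hT, insert_subset_iff]
  · simp [monomialFn, hT, insert_subset_iff]

theorem card_inter_add_mul_mem_lowDegreeSpan {A U : Finset α} (hA : A ⊆ U) (c : R) {d : ℕ}
    {x : Finset α → R} (hx : x ∈ lowDegreeSpan R U d) :
    (fun S => (#(A ∩ S) : R) + c) * x ∈ lowDegreeSpan R U (d + 1) := by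
  induction hx using Submodule.span_induction with
  | mem x hx =>
    obtain ⟨T, hT, rfl⟩ := hx
    simp only [coe_filter, mem_powerset, Set.mem_ofPred_eq] at hT
    rw [card_inter_add_mul_monomialFn]
    refine add_mem (sum_mem fun i hi => ?_) (Submodule.smul_mem _ _ ?_)
    · exact monomialFn_mem_lowDegreeSpan (insert_subset (hA hi) hT.1)
        ((card_insert_le _ _).trans (by omega))
    · exact monomialFn_mem_lowDegreeSpan hT.1 (by omega)
  | zero => simp
  | add x y _ _ hx hy => rw [mul_add]; exact add_mem hx hy
  | smul a x _ hx => rw [mul_smul_comm]; exact Submodule.smul_mem _ _ hx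

theorem prod_card_inter_add_mem_lowDegreeSpan {κ : Type*} (A : Finset α) (L : Finset κ)
    (c : κ → R) : (fun S => ∏ l ∈ L, ((#(A ∩ S) : R) + c l)) ∈ lowDegreeSpan R A #L := by
  induction L using Finset.cons_induction with
  | empty =>
    have hone : (fun S => ∏ l ∈ (∅ : Finset κ), ((#(A ∩ S) : R) + c l)) = monomialFn R ∅ := by
      funext S
      simp [monomialFn]
    rw [hone]
    exact monomialFn_mem_lowDegreeSpan (empty_subset A) le_rfl
  | cons a L ha ih =>
    rw [card_cons]
    convert card_inter_add_mul_mem_lowDegreeSpan subset_rfl (c a) ih using 1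
    funext S
    simp [prod_cons]

theorem card_le_sum_choose_of_linearIndependent [Nontrivial R] {ι : Type*} [Fintype ι]
    {f : ι → Finset α → R} (hf : LinearIndependent R f) {U : Finset α} {d : ℕ}
    (hmem : ∀ r, f r ∈ lowDegreeSpan R U d) :
    Fintype.card ι ≤ ∑ i ∈ range (d + 1), (#U).choose i := by
  classical
  set F := {T ∈ U.powerset | #T ≤ d}
  have hspan : Set.range f ≤ Submodule.span R (F.image (monomialFn R) : Set (Finset α → R)) := by
    rintro _ ⟨r, rfl⟩
    rw [coe_image]
    exact hmem r
  have hF : F ⊆ (range (d + 1)).biUnion (powersetCard · U) := fun T hT => by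
    simp only [F, mem_filter, mem_powerset] at hT
    exact mem_biUnion.2 ⟨#T, mem_range.2 (by omega), mem_powersetCard.2 ⟨hT.1, rfl⟩⟩
  calc Fintype.card ι ≤ Fintype.card (↑(F.image (monomialFn R)) : Set (Finset α → R)) :=
        linearIndependent_le_span_aux' f hf _ hspan
    _ = #(F.image (monomialFn R)) := by simp
    _ ≤ #F := card_image_le
    _ ≤ ∑ i ∈ range (d + 1), #(powersetCard i U) := (card_le_card hF).trans card_biUnion_le
    _ = ∑ i ∈ range (d + 1), (#U).choose i := by simp only [card_powersetCard]

end LowDegree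

section CrossIntersection

variable {α ι : Type*} [DecidableEq α]

theorem card_erase_inter_add_ite {A B : Finset α} {p : α} (h : p ∈ A → p ∈ B) :
    #(A.erase p ∩ B) + (if p ∈ A then 1 else 0) = #(A ∩ B) := by
  rw [erase_inter]
  split_ifs with hp
  · exact card_erase_add_one (mem_inter.2 ⟨hp, h hp⟩)
  · rw [erase_eq_of_notMem fun h' => hp (mem_inter.1 h').1, add_zero]

theorem card_le_sum_choose_of_card_inter_mem [Fintype α] [Fintype ι] (p : α)
    (A B : ι → Finset α) (L : Finset ℕ) (hAB : ∀ r s, r ≠ s → #(A r ∩ B s) ∈ L)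
    (hsub : ∀ r, A r ⊆ B r) (hnot : ∀ r, #(A r) ∉ L) :
    Fintype.card ι ≤ ∑ i ∈ range (#L + 1), (Fintype.card α - 1).choose i := by
  set f : ι → Finset α → ℚ := fun r S =>
    ∏ l ∈ L, ((#((A r).erase p ∩ S) : ℚ) + ((if p ∈ A r then 1 else 0) - l))
  have heval : ∀ r s, (p ∈ A r → p ∈ B s) → f r (B s) = ∏ l ∈ L, ((#(A r ∩ B s) : ℚ) - l) := by
    intro r s h
    simp only [f, ← card_erase_inter_add_ite h, Nat.cast_add, Nat.cast_ite, Nat.cast_one,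
      Nat.cast_zero, add_sub_assoc]
  have hli : LinearIndependent ℚ f := by
    refine linearIndependent_of_eval_triangular f B (fun r => if p ∈ B r then 0 else 1)
      (fun s => ?_) ?_
    · rw [heval s s (@hsub s p), inter_eq_left.2 (hsub s), prod_ne_zero_iff]
      intro l hl
      exact sub_ne_zero.2 (Nat.cast_injective.ne fun h => hnot s (h ▸ hl))
    · intro r s hrs hbs
      have hp : p ∈ A r → p ∈ B s := fun hpA => by
        by_contra hps
        simp [hps, hsub r hpA] at hbs
      rw [heval r s hp]
      exact prod_eq_zero (hAB r s hrs) (sub_self _)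
  have hmem : ∀ r, f r ∈ lowDegreeSpan ℚ (univ.erase p) #L := fun r =>
    lowDegreeSpan_mono (erase_subset_erase p (subset_univ _)) le_rfl
      (prod_card_inter_add_mem_lowDegreeSpan _ L _)
  simpa [card_erase_of_mem] using card_le_sum_choose_of_linearIndependent hli hmem

end CrossIntersection

/-- Theorem of Liu et al. (Lemma 2.7 in liu2024snevily). -/
theorem liu_et_al (n m k : ℕ) (A B : Fin m → Finset (Fin n))
    (L : Finset ℕ) (hL : L.card = k)
    (hAB : ∀ r s, r ≠ s → (A r ∩ B s).card ∈ L)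
    (hsub : ∀ r, A r ⊆ B r)
    (hnot : ∀ r, (A r).card ∉ L) :
    m ≤ ∑ i ∈ Finset.range (k + 1), (n - 1).choose i := by
  subst hL
  cases n with
  | zero =>
    have hm : m ≤ 1 := Fin.subsingleton_iff_le_one.1 ⟨fun r s => by
      by_contra hrs
      have hA : A r ∩ B s = A r := Subsingleton.elim _ _
      exact hnot r (hA ▸ hAB r s hrs)⟩
    simpa [sum_range_succ'] using hm
  | succ n => simpa using card_le_sum_choose_of_card_inter_mem 0 A B L hAB hsub hnot
end

section
/- Let L = {l_1, …, l_s} be a set of s nonnegative integers, and let A_1, …, A_m be pairwise distinct subsets of [n] such that |A_i ∩ A_j| ∈ L for all i ≠ j. Then m ≤ ∑_{i=0}^{s} C(n, i), where C(a,b) denotes the binomial coefficient. -/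
/-!
Identify `Finset α` with the cube `{0,1}^α`, so that `B ↦ #(A ∩ B)` is the linear form
`∑_{a ∈ A} x_a`. For each set `A_i` of the family, the function
`f_i(B) = ∏_{l ∈ L, l < #A_i} (#(A_i ∩ B) - l)` is a polynomial of degree at most `s` on the cube,
hence (using `x_a² = x_a`) a combination of the multilinear monomials `∏_{a ∈ S} x_a` with `#S ≤ s`,
which span a space of dimension at most `∑_{i ≤ s} C(n, i)`. Ordering the sets by size,
`f_j(A_i) = 0` whenever `j ≠ i` and `#A_i ≤ #A_j`, while `f_i(A_i) ≠ 0`, so the `f_i` are linearly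
independent.
-/

open Finset

theorem linearIndependent_of_eval_triangular_s2 {ι X R β : Type*} [Fintype ι] [Ring R]
    [NoZeroDivisors R] [LinearOrder β] (f : ι → X → R) (x : ι → X) (w : ι → β)
    (hdiag : ∀ i, f i (x i) ≠ 0) (hoff : ∀ i j, i ≠ j → w i ≤ w j → f j (x i) = 0) :
    LinearIndependent R f := by
  classical
  rw [Fintype.linearIndependent_iff]
  intro c hc
  by_contra! hne
  -- Evaluating at `x i` for a nonzero coefficient `c i` of least weight kills all other terms.
  obtain ⟨i, hci, hmin⟩ := exists_min_image {j | c j ≠ 0} w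
    (hne.imp fun j hj => by simpa using hj)
  have hsum := congrFun hc (x i)
  simp only [Finset.sum_apply, Pi.smul_apply, smul_eq_mul, Pi.zero_apply] at hsum
  rw [sum_eq_single i ?_ (by simp)] at hsum
  · exact mul_ne_zero (by simpa using hci) (hdiag i) hsum
  · intro j _ hji
    by_cases hcj : c j = 0
    · rw [hcj, zero_mul]
    · rw [hoff i j hji.symm (hmin j (by simpa using hcj)), mul_zero]

theorem Finset.card_inter_lt_card_left {α : Type*} [DecidableEq α] {A B : Finset α}
    (hne : A ≠ B) (h : #B ≤ #A) : #(A ∩ B) < #A := by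
  refine card_lt_card (ssubset_of_subset_of_ne inter_subset_left fun hAB => hne ?_)
  exact eq_of_subset_of_card_le (inter_eq_left.1 hAB) h

theorem Finset.card_filter_card_le (α : Type*) [Fintype α] (d : ℕ) :
    #{S : Finset α | #S ≤ d} = ∑ i ∈ range (d + 1), (Fintype.card α).choose i := by
  rw [card_eq_sum_card_fiberwise (f := card) (t := range (d + 1))
    fun S hS => mem_range_succ_iff.2 (mem_filter.1 hS).2]
  refine sum_congr rfl fun i hi => ?_
  rw [← card_univ, ← card_powersetCard]
  congr 1
  ext S
  simp only [mem_filter, mem_univ, true_and, mem_powersetCard, subset_univ]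
  exact ⟨And.right, fun h => ⟨h ▸ mem_range_succ_iff.1 hi, h⟩⟩

namespace FranklWilson

variable {R α : Type*} [CommRing R] [DecidableEq α]

variable (R) in
/-- The multilinear monomial `∏_{a ∈ S} x_a` as a function on the cube `{0,1}^α ≃ Finset α`. -/
def monomial (S : Finset α) : Finset α → R := fun B => if S ⊆ B then 1 else 0

variable (R α) in
def degreeLE (d : ℕ) : Submodule R (Finset α → R) :=
  Submodule.span R (monomial R '' {S | #S ≤ d})

lemma monomial_mul (S T : Finset α) :
    monomial R S * monomial R T = monomial R (S ∪ T) := by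
  funext B
  by_cases hS : S ⊆ B <;> by_cases hT : T ⊆ B <;> simp [monomial, union_subset_iff, hS, hT]

lemma monomial_empty : monomial R (∅ : Finset α) = 1 := by
  funext B
  simp [monomial]

lemma degreeLE_mono {d e : ℕ} (h : d ≤ e) : degreeLE R α d ≤ degreeLE R α e :=
  Submodule.span_mono (Set.image_mono fun _ hS => le_trans hS h)

lemma degreeLE_mul_le (d e : ℕ) : degreeLE R α d * degreeLE R α e ≤ degreeLE R α (d + e) := by
  rw [degreeLE, degreeLE, Submodule.span_mul_span]
  refine Submodule.span_mono ?_
  rintro _ ⟨_, ⟨S, hS, rfl⟩, _, ⟨T, hT, rfl⟩, rfl⟩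
  exact ⟨S ∪ T, (card_union_le S T).trans (add_le_add hS hT), (monomial_mul S T).symm⟩

lemma one_mem_degreeLE_zero : (1 : Finset α → R) ∈ degreeLE R α 0 :=
  Submodule.subset_span ⟨∅, by simp, monomial_empty⟩

lemma card_inter_sub_mem_degreeLE_one (A : Finset α) (r : R) :
    (fun B => (#(A ∩ B) : R) - r) ∈ degreeLE R α 1 := by
  have hlin : (fun B => (#(A ∩ B) : R) - r) = ∑ a ∈ A, monomial R {a} - r • 1 := by
    funext B
    simp [monomial, Finset.sum_apply]
  rw [hlin]
  refine sub_mem (sum_mem fun a _ => Submodule.subset_span ⟨{a}, by simp, rfl⟩) ?_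
  exact Submodule.smul_mem _ r (degreeLE_mono zero_le_one one_mem_degreeLE_zero)

lemma prod_mem_degreeLE {ι : Type*} (s : Finset ι) (g : ι → Finset α → R)
    (hg : ∀ i ∈ s, g i ∈ degreeLE R α 1) : ∏ i ∈ s, g i ∈ degreeLE R α #s := by
  classical
  induction s using Finset.induction with
  | empty => exact one_mem_degreeLE_zero
  | insert i s hi ih =>
    rw [prod_insert hi, card_insert_of_notMem hi, add_comm]
    exact degreeLE_mul_le 1 #s (Submodule.mul_mem_mul (hg i (mem_insert_self i s))
      (ih fun j hj => hg j (mem_insert_of_mem hj)))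

lemma finrank_degreeLE_le [Fintype α] [StrongRankCondition R] (d : ℕ) :
    Module.finrank R (degreeLE R α d) ≤ ∑ i ∈ range (d + 1), (Fintype.card α).choose i := by
  classical
  have hgen : monomial R '' {S : Finset α | #S ≤ d} =
      ↑(image (monomial R) {S : Finset α | #S ≤ d}) := by
    simp
  calc Module.finrank R (degreeLE R α d) ≤ #(image (monomial R) {S : Finset α | #S ≤ d}) := by
        rw [degreeLE, hgen]
        exact finrank_span_finset_le_card _
    _ ≤ #{S : Finset α | #S ≤ d} := card_image_le
    _ = _ := card_filter_card_le α d

variable (R) in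
def intersectionPoly (L : Finset ℕ) (A : Finset α) : Finset α → R :=
  ∏ l ∈ L with l < #A, fun B => (#(A ∩ B) : R) - l

lemma intersectionPoly_mem_degreeLE (L : Finset ℕ) (A : Finset α) :
    intersectionPoly R L A ∈ degreeLE R α #L :=
  degreeLE_mono (card_filter_le _ _)
    (prod_mem_degreeLE _ _ fun l _ => card_inter_sub_mem_degreeLE_one A (l : R))

lemma intersectionPoly_apply_eq_zero {L : Finset ℕ} {A B : Finset α} (hL : #(A ∩ B) ∈ L)
    (hlt : #(A ∩ B) < #A) : intersectionPoly R L A B = 0 := by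
  rw [intersectionPoly, Finset.prod_apply]
  exact prod_eq_zero (mem_filter.2 ⟨hL, hlt⟩) (sub_self _)

lemma intersectionPoly_self_ne_zero [IsDomain R] [CharZero R] (L : Finset ℕ) (A : Finset α) :
    intersectionPoly R L A A ≠ 0 := by
  rw [intersectionPoly, Finset.prod_apply, prod_ne_zero_iff]
  intro l hl
  rw [inter_self, sub_ne_zero]
  exact Nat.cast_injective.ne (mem_filter.1 hl).2.ne'

end FranklWilson

open FranklWilson in
/-- The Frankl–Wilson theorem. -/
theorem frankl_wilson (n m s : ℕ) (L : Finset ℕ) (hL : L.card = s)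
    (A : Fin m → Finset (Fin n)) (hA : Function.Injective A)
    (hint : ∀ i j, i ≠ j → (A i ∩ A j).card ∈ L) :
    m ≤ ∑ i ∈ Finset.range (s + 1), n.choose i := by
  subst hL
  let f : Fin m → Finset (Fin n) → ℝ := fun i => intersectionPoly ℝ L (A i)
  have hf_mem (i : Fin m) : f i ∈ degreeLE ℝ (Fin n) #L := intersectionPoly_mem_degreeLE L (A i)
  have hf_indep : LinearIndependent ℝ f :=
    linearIndependent_of_eval_triangular_s2 f A (fun i => #(A i))
      (fun i => intersectionPoly_self_ne_zero L (A i))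
      fun i j hij hle => intersectionPoly_apply_eq_zero (hint j i hij.symm)
        (card_inter_lt_card_left (hA.ne hij.symm) hle)
  calc m = Module.finrank ℝ (Submodule.span ℝ (Set.range f)) := by
        rw [finrank_span_eq_card hf_indep, Fintype.card_fin]
    _ ≤ Module.finrank ℝ (degreeLE ℝ (Fin n) #L) :=
        Submodule.finrank_mono (Submodule.span_le.2 (Set.range_subset_iff.2 hf_mem))
    _ ≤ ∑ i ∈ range (#L + 1), n.choose i := by
        simpa only [Fintype.card_fin] using finrank_degreeLE_le (R := ℝ) (α := Fin n) #L
end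

section
/- Let p be a prime not dividing n, and let L ⊆ Z/pZ satisfy 0 ∉ L and L = −L (i.e., x ∈ L iff −x ∈ L). Let A_1, …, A_m be pairwise distinct subsets of [n] such that |A_i| mod p ∈ L for every i, and |A_i ∩ A_j| ≡ 0 (mod p) for all i ≠ j. Then m ≤ ∑_{i=0}^{|L|} C(n−1, i), where C(a,b) denotes the binomial coefficient. -/
/-!
The characteristic vectors of the sets `A i` over the field `ZMod p` are pairwise orthogonal for
the dot product, while each has nonzero square `|A i| mod p ∈ L ∌ 0`; hence they are linearly
independent in `(ZMod p)^n` and `m ≤ n = C(n-1,0) + C(n-1,1)`, which is at most the sum as soon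
as `L` is nonempty (and `L` is nonempty unless `m = 0`).
-/

open Finset Matrix

section CharVec

variable {α : Type*} [DecidableEq α] (K : Type*)

def charVec [Zero K] [One K] (s : Finset α) : α → K := fun x => if x ∈ s then 1 else 0

variable [Fintype α]

theorem charVec_dotProduct_charVec [NonAssocSemiring K] (s t : Finset α) :
    charVec K s ⬝ᵥ charVec K t = #(s ∩ t) := by
  simp only [dotProduct, charVec, mul_ite, mul_one, mul_zero, ← ite_and, ← mem_inter]
  rw [sum_ite_mem, univ_inter, sum_const, nsmul_one, inter_comm]

variable {K} [Field K] {ι : Type*} {A : ι → Finset α}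

theorem linearIndependent_charVec (hself : ∀ i, (#(A i) : K) ≠ 0)
    (hortho : ∀ i j, i ≠ j → (#(A i ∩ A j) : K) = 0) :
    LinearIndependent K fun i => charVec K (A i) := by
  refine LinearMap.BilinForm.linearIndependent_of_iIsOrtho (B := dotProductBilin K K)
    (fun i j hij => ?_) fun i => ?_
  · show charVec K (A i) ⬝ᵥ charVec K (A j) = 0
    rw [charVec_dotProduct_charVec, hortho i j hij]
  · simpa only [dotProductBilin_apply_apply, charVec_dotProduct_charVec, inter_self] using hself i

theorem card_le_card_of_card_inter_eq_zero [Fintype ι] (hself : ∀ i, (#(A i) : K) ≠ 0)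
    (hortho : ∀ i j, i ≠ j → (#(A i ∩ A j) : K) = 0) :
    Fintype.card ι ≤ Fintype.card α := by
  simpa using (linearIndependent_charVec hself hortho).fintype_card_le_finrank

end CharVec

theorem le_sum_range_choose_pred {k : ℕ} (hk : 1 ≤ k) (n : ℕ) :
    n ≤ ∑ i ∈ range (k + 1), (n - 1).choose i := by
  obtain rfl | hn := Nat.eq_zero_or_pos n
  · exact Nat.zero_le _
  have hsub : ({0, 1} : Finset ℕ) ⊆ range (k + 1) := by
    intro x hx
    simp only [mem_insert, mem_singleton] at hx
    rcases hx with rfl | rfl <;> simp only [mem_range] <;> omega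
  calc n = ∑ i ∈ ({0, 1} : Finset ℕ), (n - 1).choose i := by
        rw [sum_pair zero_ne_one, Nat.choose_zero_right, Nat.choose_one_right]; omega
    _ ≤ ∑ i ∈ range (k + 1), (n - 1).choose i := sum_le_sum_of_subset hsub

theorem sharper_not_dvd_general (p : ℕ) (hp : p.Prime) (n : ℕ)
    (L : Finset (ZMod p)) (h0 : (0 : ZMod p) ∉ L)
    (m : ℕ) (A : Fin m → Finset (Fin n))
    (hsize : ∀ i, ((A i).card : ZMod p) ∈ L)
    (hint : ∀ i j, i ≠ j → (((A i ∩ A j).card : ZMod p) = 0)) :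
    m ≤ ∑ i ∈ Finset.range (L.card + 1), (n - 1).choose i := by
  have : Fact p.Prime := ⟨hp⟩
  obtain rfl | hm := Nat.eq_zero_or_pos m
  · exact Nat.zero_le _
  have hL : 1 ≤ L.card := one_le_card.mpr ⟨_, hsize ⟨0, hm⟩⟩
  have hmn : m ≤ n := by
    simpa using card_le_card_of_card_inter_eq_zero (fun i h => h0 (h ▸ hsize i)) hint
  exact hmn.trans (le_sum_range_choose_pred hL n)

/-- Sharpened Snevily-type theorem, case p ∤ n. -/
theorem sharper_not_dvd (p : ℕ) (hp : p.Prime) (n : ℕ) (hpn : ¬ p ∣ n)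
    (L : Finset (ZMod p)) (h0 : (0 : ZMod p) ∉ L) (hsym : ∀ x : ZMod p, x ∈ L ↔ -x ∈ L)
    (m : ℕ) (A : Fin m → Finset (Fin n)) (hA : Function.Injective A)
    (hsize : ∀ i, ((A i).card : ZMod p) ∈ L)
    (hint : ∀ i j, i ≠ j → (((A i ∩ A j).card : ZMod p) = 0)) :
    m ≤ ∑ i ∈ Finset.range (L.card + 1), (n - 1).choose i :=
  sharper_not_dvd_general p hp n L h0 m A hsize hint
end

section
/- Let n be an even positive integer, and let A_1, …, A_m be pairwise distinct subsets of [n] such that |A_i| is even for every i, and |A_i ∩ A_j| is odd for all i ≠ j. Then m ≤ n − 1. -/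
/-!
Over `ZMod 2` the characteristic vectors of `n` of the sets have Gram matrix `J - I`. If
`∑ cᵢ vᵢ = 0`, pairing with `vⱼ` gives `cⱼ = ∑ cᵢ`, and summing over `j` gives
`∑ cᵢ = n ∑ cᵢ = 0` as `n` is even; so the vectors are independent. But they all have even
weight, i.e. lie in the hyperplane orthogonal to the all-ones vector, whose dimension is `n - 1`.
-/

open Finset Module

theorem linearIndependent_of_dotProduct_eq_one_of_ne {K ι κ : Type*} [CommRing K] [Fintype ι]
    [Fintype κ] {v : ι → κ → K}
    (hcard : (Fintype.card ι : K) = 0) (hself : ∀ i, v i ⬝ᵥ v i = 0)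
    (hne : ∀ i j, i ≠ j → v i ⬝ᵥ v j = 1) : LinearIndependent K v := by
  classical
  rw [Fintype.linearIndependent_iff]
  intro c hc
  have hcoeff : ∀ j, c j = ∑ i, c i := by
    intro j
    have hdot : (∑ i, c i • v i) ⬝ᵥ v j = ∑ i, c i - c j := by
      rw [sum_dotProduct, ← sum_erase_add _ _ (mem_univ j), ← sum_erase_add _ c (mem_univ j)]
      simp only [smul_dotProduct, hself, smul_eq_mul, mul_zero, add_zero, add_sub_cancel_right]
      exact Finset.sum_congr rfl fun i hi => by rw [hne i j (ne_of_mem_erase hi), mul_one]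
    rw [hc, zero_dotProduct] at hdot
    exact (sub_eq_zero.mp hdot.symm).symm
  have hsum : ∑ i, c i = 0 := by
    calc ∑ i, c i = ∑ _i : ι, ∑ i, c i := Finset.sum_congr rfl fun j _ => hcoeff j
      _ = 0 := by rw [sum_const, card_univ, nsmul_eq_mul, hcard, zero_mul]
  exact fun j => (hcoeff j).trans hsum

theorem LinearIndependent.card_lt_finrank_of_forall_apply_eq_zero {K V ι : Type*} [DivisionRing K]
    [AddCommGroup V] [Module K V] [FiniteDimensional K V] [Fintype ι] {v : ι → V}
    (hv : LinearIndependent K v) {f : V →ₗ[K] K} (hf : f ≠ 0) (hvf : ∀ i, f (v i) = 0) :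
    Fintype.card ι < finrank K V := by
  rw [← finrank_span_eq_card hv]
  refine Submodule.finrank_lt fun htop => hf (LinearMap.ker_eq_top.mp (top_le_iff.mp ?_))
  exact htop ▸ Submodule.span_le.mpr (Set.range_subset_iff.mpr hvf)

section
variable {α K : Type*} [Fintype α] [CommSemiring K]

theorem Finset.sum_indicator_one (s : Finset α) :
    ∑ k, (s : Set α).indicator (1 : α → K) k = #s := by
  rw [sum_indicator_subset _ (subset_univ s)]
  simp

theorem Finset.indicator_one_dotProduct_indicator_one [DecidableEq α] (s t : Finset α) :
    (s : Set α).indicator (1 : α → K) ⬝ᵥ (t : Set α).indicator 1 = #(s ∩ t) := by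
  rw [← sum_indicator_one, coe_inter, Set.inter_indicator_one]
  rfl

end

theorem reverse_odd_town_even_general (n : ℕ) (hn : 0 < n) (heven : Even n)
    (m : ℕ) (A : Fin m → Finset (Fin n))
    (hsize : ∀ i, Even (A i).card)
    (hint : ∀ i j, i ≠ j → Odd (A i ∩ A j).card) :
    m ≤ n - 1 := by
  by_contra! hm
  have : Nonempty (Fin n) := Fin.pos_iff_nonempty.mp hn
  let B : Fin n → Finset (Fin n) := fun i => A (Fin.castLE (by omega) i)
  let v : Fin n → Fin n → ZMod 2 := fun i => (B i : Set (Fin n)).indicator 1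
  have hv : LinearIndependent (ZMod 2) v := by
    refine linearIndependent_of_dotProduct_eq_one_of_ne ?_ (fun i => ?_) fun i j hij => ?_
    · simpa [ZMod.natCast_eq_zero_iff_even] using heven
    · simpa [v, indicator_one_dotProduct_indicator_one, ZMod.natCast_eq_zero_iff_even] using
        hsize _
    · simpa [v, indicator_one_dotProduct_indicator_one, ZMod.natCast_eq_one_iff_odd] using
        hint _ _ ((Fin.castLE_injective _).ne hij)
  have hf : dotProductEquiv (ZMod 2) (Fin n) 1 ≠ 0 :=
    (dotProductEquiv _ _).map_ne_zero_iff.mpr one_ne_zero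
  have hlt := hv.card_lt_finrank_of_forall_apply_eq_zero hf fun i => by
    rw [dotProductEquiv_apply_apply, one_dotProduct, sum_indicator_one,
      ZMod.natCast_eq_zero_iff_even]
    exact hsize _
  simp at hlt

/-- Tight bound for the reverse odd-town problem when n is even. -/
theorem reverse_odd_town_even (n : ℕ) (hn : 0 < n) (heven : Even n)
    (m : ℕ) (A : Fin m → Finset (Fin n)) (hA : Function.Injective A)
    (hsize : ∀ i, Even (A i).card)
    (hint : ∀ i j, i ≠ j → Odd (A i ∩ A j).card) :
    m ≤ n - 1 :=
  reverse_odd_town_even_general n hn heven m A hsize hint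
end

section
/- Let p be a prime dividing n, let k ≥ 2 be an integer, and let L ⊆ Z/pZ satisfy L = −L (i.e., x ∈ L iff −x ∈ L). Let A_1, …, A_m be subsets of [n] with m ≥ k such that: for every j with 1 ≤ j ≤ k−1 and all indices 1 ≤ r_1 < ⋯ < r_j ≤ m, |A_{r_1} ∩ ⋯ ∩ A_{r_j}| ≡ 0 (mod p); and for all indices 1 ≤ r_1 < ⋯ < r_k ≤ m, |A_{r_1} ∩ ⋯ ∩ A_{r_k}| mod p ∈ L. Fix i with 1 ≤ i ≤ m, and define A'_i = [n] \ A_i and A'_j = A_j for j ≠ i. Then the family A'_1, …, A'_m satisfies the same conditions: all j-wise intersections for 1 ≤ j ≤ k−1 have size ≡ 0 (mod p), and all k-wise intersections have size whose residue mod p lies in L. -/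
/-!
Complementing `A i` leaves every intersection avoiding the index `i` unchanged. An intersection
`S ∩ A i` with `i` among its indices becomes `S \ A i`, whose size is `|S| - |S ∩ A i|`; here `S` is
an intersection of one fewer set, or `[n]` itself, so `|S| ≡ 0 (mod p)` and the residue only
changes sign, which `L = -L` absorbs.
-/

open Finset

theorem Fin.inf_univ_succAbove {α : Type*} [SemilatticeInf α] [OrderTop α] {j : ℕ}
    (f : Fin (j + 1) → α) (x : Fin (j + 1)) :
    univ.inf f = f x ⊓ univ.inf fun t => f (x.succAbove t) := by
  rw [Fin.univ_succAbove j x, inf_cons, inf_map]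
  rfl

theorem card_inf_compl_member_add_card_inf {α ι : Type*} [Fintype α] [DecidableEq α]
    {A A' : ι → Finset α} {i : ι} (hA'i : A' i = (A i)ᶜ)
    (hA' : ∀ l, l ≠ i → A' l = A l) {j : ℕ} {r : Fin (j + 1) → ι} (hr : Function.Injective r)
    {t₀ : Fin (j + 1)} (ht₀ : r t₀ = i) :
    #(univ.inf fun t => A' (r t)) + #(univ.inf fun t => A (r t)) =
      #(univ.inf fun t => A (r (t₀.succAbove t))) := by
  set S := univ.inf fun t => A (r (t₀.succAbove t))
  have hS : (univ.inf fun t => A' (r (t₀.succAbove t))) = S :=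
    inf_congr rfl fun t _ => hA' _ fun h => t₀.succAbove_ne t (hr (h.trans ht₀.symm))
  rw [Fin.inf_univ_succAbove (fun t => A' (r t)) t₀, Fin.inf_univ_succAbove (fun t => A (r t)) t₀,
    hS, ht₀, hA'i, inf_comm, inf_comm (A i), inf_eq_inter, inf_eq_inter, ← sdiff_eq_inter_compl]
  exact card_sdiff_add_card_inter S (A i)

theorem complement_lemma_general (p : ℕ) (n : ℕ) (hpn : p ∣ n)
    (k : ℕ)
    (L : Finset (ZMod p)) (hsym : ∀ x : ZMod p, x ∈ L ↔ -x ∈ L)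
    (m : ℕ) (A : Fin m → Finset (Fin n))
    (hlow : ∀ j : ℕ, 1 ≤ j → j ≤ k - 1 → ∀ r : Fin j → Fin m, StrictMono r →
      ((Finset.univ.inf fun t : Fin j => A (r t)).card : ZMod p) = 0)
    (htop : ∀ r : Fin k → Fin m, StrictMono r →
      ((Finset.univ.inf fun t : Fin k => A (r t)).card : ZMod p) ∈ L)
    (i : Fin m) (A' : Fin m → Finset (Fin n))
    (hA'i : A' i = (A i)ᶜ) (hA'j : ∀ j, j ≠ i → A' j = A j) :
    (∀ j : ℕ, 1 ≤ j → j ≤ k - 1 → ∀ r : Fin j → Fin m, StrictMono r →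
      ((Finset.univ.inf fun t : Fin j => A' (r t)).card : ZMod p) = 0) ∧
    (∀ r : Fin k → Fin m, StrictMono r →
      ((Finset.univ.inf fun t : Fin k => A' (r t)).card : ZMod p) ∈ L) := by
  have hlow₀ : ∀ j ≤ k - 1, ∀ r : Fin j → Fin m, StrictMono r →
      ((univ.inf fun t : Fin j => A (r t)).card : ZMod p) = 0 := by
    rintro (_ | j) hj r hr
    · simpa using (ZMod.natCast_eq_zero_iff n p).mpr hpn
    · exact hlow _ (by omega) hj r hr
  have hsign : ∀ j ≤ k, ∀ r : Fin j → Fin m, StrictMono r →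
      ((univ.inf fun t => A' (r t)).card : ZMod p) = (univ.inf fun t => A (r t)).card ∨
      ((univ.inf fun t => A' (r t)).card : ZMod p) = -(univ.inf fun t => A (r t)).card := by
    intro j hj r hr
    by_cases hi : ∃ t₀, r t₀ = i
    · obtain ⟨t₀, ht₀⟩ := hi
      obtain ⟨j, rfl⟩ : ∃ j', j = j' + 1 := ⟨j - 1, by have := t₀.pos; omega⟩
      have hsum := congrArg (Nat.cast : ℕ → ZMod p)
        (card_inf_compl_member_add_card_inf hA'i hA'j hr.injective ht₀)
      rw [Nat.cast_add, hlow₀ j (by omega) (fun t => r (t₀.succAbove t))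
        (hr.comp (Fin.strictMono_succAbove t₀))] at hsum
      exact .inr (eq_neg_of_add_eq_zero_left hsum)
    · push Not at hi
      exact .inl (congrArg _ (congrArg _ (inf_congr rfl fun t _ => hA'j _ (hi t))))
  refine ⟨fun j hj₁ hj r hr => ?_, fun r hr => ?_⟩
  · rcases hsign j (by omega) r hr with h | h <;> simp [h, hlow j hj₁ hj r hr]
  · rcases hsign k le_rfl r hr with h | h
    · exact h ▸ htop r hr
    · exact h ▸ (hsym _).mp (htop r hr)

/-- The Complement Lemma. -/
theorem complement_lemma (p : ℕ) (hp : p.Prime) (n : ℕ) (hpn : p ∣ n)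
    (k : ℕ) (hk : 2 ≤ k)
    (L : Finset (ZMod p)) (hsym : ∀ x : ZMod p, x ∈ L ↔ -x ∈ L)
    (m : ℕ) (hm : k ≤ m) (A : Fin m → Finset (Fin n))
    (hlow : ∀ j : ℕ, 1 ≤ j → j ≤ k - 1 → ∀ r : Fin j → Fin m, StrictMono r →
      ((Finset.univ.inf fun t : Fin j => A (r t)).card : ZMod p) = 0)
    (htop : ∀ r : Fin k → Fin m, StrictMono r →
      ((Finset.univ.inf fun t : Fin k => A (r t)).card : ZMod p) ∈ L)
    (i : Fin m) (A' : Fin m → Finset (Fin n))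
    (hA'i : A' i = (A i)ᶜ) (hA'j : ∀ j, j ≠ i → A' j = A j) :
    (∀ j : ℕ, 1 ≤ j → j ≤ k - 1 → ∀ r : Fin j → Fin m, StrictMono r →
      ((Finset.univ.inf fun t : Fin j => A' (r t)).card : ZMod p) = 0) ∧
    (∀ r : Fin k → Fin m, StrictMono r →
      ((Finset.univ.inf fun t : Fin k => A' (r t)).card : ZMod p) ∈ L) :=
  complement_lemma_general p n hpn k L hsym m A hlow htop i A' hA'i hA'j
end

section
/- Let p be a prime, k ≥ 2 an integer, and let L_1, …, L_k be subsets of Z/pZ such that L_t ∩ L_{t+1} = ∅ for some integer t with 1 < t ≤ k−1. Let A_1, …, A_m be pairwise distinct subsets of [n] with m ≥ k such that for every j with 1 ≤ j ≤ k and all indices 1 ≤ r_1 < ⋯ < r_j ≤ m, |A_{r_1} ∩ ⋯ ∩ A_{r_j}| mod p ∈ L_j. Fix γ with 1 ≤ γ ≤ m. Then: (a) the map i ↦ A_i ∩ A_γ is injective on {1,…,m} \ {γ} (so the family {A_i ∩ A_γ : i ≠ γ} has exactly m−1 members); and (b) for every j with 1 ≤ j ≤ k−1 and all indices i_1 < ⋯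 < i_j in {1,…,m} \ {γ}, |(A_{i_1} ∩ A_γ) ∩ ⋯ ∩ (A_{i_j} ∩ A_γ)| mod p ∈ L_{j+1}. -/
/-!
Every intersection of at most `k` of the sets is an intersection indexed by a finset of size at
most `k`. Intersecting `j` traces `A_i ∩ A_γ` is intersecting the `j + 1` sets `A_i, A_γ`, which
gives (b). For (a), if `A_i ∩ A_γ = A_j ∩ A_γ`, then adjoining `A_j` to any intersection of `t` sets
including `A_i` and `A_γ` does not change it, so its size would lie in both `L_t` and `L_{t+1}`.
-/

open Finset

variable {ι α : Type*} [SemilatticeInf α] [OrderTop α]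

lemma Finset.inf_orderEmbOfFin [LinearOrder ι] (S : Finset ι) (f : ι → α) :
    (univ.inf fun s : Fin #S => f (S.orderEmbOfFin rfl s)) = S.inf f := by
  conv_rhs => rw [← S.image_orderEmbOfFin_univ rfl, inf_image]
  rfl

lemma Finset.forall_inf_of_forall_strictMono [LinearOrder ι] {f : ι → α} {P : ℕ → α → Prop}
    {k : ℕ} (hP : ∀ j, 1 ≤ j → j ≤ k → ∀ r : Fin j → ι, StrictMono r → P j (univ.inf (f ∘ r)))
    (S : Finset ι) (hS : S.Nonempty) (hSk : #S ≤ k) : P #S (S.inf f) := by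
  rw [← S.inf_orderEmbOfFin f]
  exact hP #S hS.card_pos hSk _ (S.orderEmbOfFin rfl).strictMono

lemma Finset.univ_inf_comp_inf_eq_inf_insert_image [DecidableEq ι] {j : ℕ} (hj : 1 ≤ j)
    (r : Fin j → ι) (f : ι → α) (γ : ι) :
    (univ.inf fun s => f (r s) ⊓ f γ) = (insert γ (univ.image r)).inf f := by
  have : (univ : Finset (Fin j)).Nonempty := ⟨⟨0, hj⟩, mem_univ _⟩
  rw [show (fun s => f (r s) ⊓ f γ) = (f ∘ r) ⊓ fun _ => f γ from rfl, inf_inf,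
    inf_const this, inf_insert, inf_image, inf_comm]

lemma Finset.card_insert_image_univ [DecidableEq ι] {j : ℕ} {r : Fin j → ι} (hr : r.Injective) {γ : ι}
    (hγ : ∀ s, r s ≠ γ) : #(insert γ (univ.image r)) = j + 1 := by
  rw [card_insert_of_notMem (by simpa using hγ), card_image_of_injective _ hr, card_univ,
    Fintype.card_fin]

lemma injOn_inf_right_of_forall_inf [Fintype ι] [DecidableEq ι] {f : ι → α} {P : ℕ → α → Prop}
    {k t : ℕ} (hP : ∀ S : Finset ι, S.Nonempty → #S ≤ k → P #S (S.inf f))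
    (ht : 2 ≤ t) (htk : t < k) (htι : t < Fintype.card ι) (hexcl : ∀ x, P t x → ¬ P (t + 1) x)
    (γ : ι) : Set.InjOn (fun i => f i ⊓ f γ) {γ}ᶜ := by
  intro i hi j hj h
  by_contra hij
  obtain ⟨T, hiγT, hTj, hT⟩ := exists_subsuperset_card_eq (s := {i, γ}) (t := univ.erase j)
    (n := t) (by simp [subset_iff, hij, Ne.symm hj]) (by rw [card_pair hi]; exact ht)
    (by rw [card_erase_of_mem (mem_univ _), card_univ]; omega)
  have hiT : i ∈ T := hiγT (by simp)
  have hγT : γ ∈ T := hiγT (by simp)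
  have hjT : j ∉ T := fun hjT => by simpa using hTj hjT
  have hTf : T.inf f ≤ f j :=
    calc T.inf f ≤ f i ⊓ f γ := le_inf (inf_le hiT) (inf_le hγT)
      _ = f j ⊓ f γ := h
      _ ≤ f j := inf_le_left
  have hjTf : (insert j T).inf f = T.inf f := by rw [inf_insert, inf_eq_right.2 hTf]
  have hPt := hP T ⟨i, hiT⟩ (by omega)
  have hPt1 := hP (insert j T) (insert_nonempty _ _) (by rw [card_insert_of_notMem hjT]; omega)
  rw [hT] at hPt
  rw [card_insert_of_notMem hjT, hT, hjTf] at hPt1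
  exact hexcl _ hPt hPt1

theorem trace_lemma_general (p : ℕ) (n : ℕ) (k : ℕ)
    (L : ℕ → Finset (ZMod p)) (t : ℕ) (ht1 : 1 < t) (htk : t ≤ k - 1)
    (hdisj : Disjoint (L t) (L (t + 1)))
    (m : ℕ) (hm : k ≤ m) (A : Fin m → Finset (Fin n))
    (hint : ∀ j : ℕ, 1 ≤ j → j ≤ k → ∀ r : Fin j → Fin m, StrictMono r →
      ((Finset.univ.inf fun s : Fin j => A (r s)).card : ZMod p) ∈ L j)
    (γ : Fin m) :
    (∀ i j : Fin m, i ≠ γ → j ≠ γ → A i ∩ A γ = A j ∩ A γ → i = j) ∧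
    (∀ j : ℕ, 1 ≤ j → j ≤ k - 1 → ∀ r : Fin j → Fin m, StrictMono r →
      (∀ s : Fin j, r s ≠ γ) →
      ((Finset.univ.inf fun s : Fin j => A (r s) ∩ A γ).card : ZMod p) ∈ L (j + 1)) := by
  let P : ℕ → Finset (Fin n) → Prop := fun j B => ((#B : ℕ) : ZMod p) ∈ L j
  have hfin := forall_inf_of_forall_strictMono (P := P) hint
  refine ⟨fun i j hi hj h => ?_, fun j hj1 hjk r hr hrγ => ?_⟩
  · exact injOn_inf_right_of_forall_inf (t := t) hfin (by omega) (by omega)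
      (by rw [Fintype.card_fin]; omega) (fun _ h => disjoint_left.1 hdisj h) γ hi hj h
  · have hcard := card_insert_image_univ hr.injective hrγ
    have := hfin (insert γ (univ.image r)) (insert_nonempty _ _) (by omega)
    rwa [hcard, ← univ_inf_comp_inf_eq_inf_insert_image hj1] at this

/-- The Trace Lemma. -/
theorem trace_lemma (p : ℕ) (hp : p.Prime) (n : ℕ) (k : ℕ) (hk : 2 ≤ k)
    (L : ℕ → Finset (ZMod p)) (t : ℕ) (ht1 : 1 < t) (htk : t ≤ k - 1)
    (hdisj : Disjoint (L t) (L (t + 1)))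
    (m : ℕ) (hm : k ≤ m) (A : Fin m → Finset (Fin n)) (hA : Function.Injective A)
    (hint : ∀ j : ℕ, 1 ≤ j → j ≤ k → ∀ r : Fin j → Fin m, StrictMono r →
      ((Finset.univ.inf fun s : Fin j => A (r s)).card : ZMod p) ∈ L j)
    (γ : Fin m) :
    (∀ i j : Fin m, i ≠ γ → j ≠ γ → A i ∩ A γ = A j ∩ A γ → i = j) ∧
    (∀ j : ℕ, 1 ≤ j → j ≤ k - 1 → ∀ r : Fin j → Fin m, StrictMono r →
      (∀ s : Fin j, r s ≠ γ) →
      ((Finset.univ.inf fun s : Fin j => A (r s) ∩ A γ).card : ZMod p) ∈ L (j + 1)) :=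
  trace_lemma_general p n k L t ht1 htk hdisj m hm A hint γ
end
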